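/- arXiv:2102.09611 — 2 statements merged into one kernel-verified Lean document; each statement's English description precedes it below -/
import Mathlib

section
/- Let σ : ℝ → ℝ be continuously differentiable and define g_μ(v) = σ(|v|)(e_μ × v) for μ = 1,2,3. Then each g_μ is differentiable at every v ≠ 0, and for every v ∈ ℝ³ with v ≠ 0 and each i ∈ {1,2,3}: (1/2) Σ_{μ=1}^3 Σ_{j=1}^3 (∂g^i_μ/∂v^j)(v) · g^j_μ(v) = −σ(|v|)² v^i. Hence with G ≡ 0 the drift coefficient K_i = G^i + (1/2)Σ_μ Σ_j (∂g^i_μ/∂v^j) g^j_μ associated with the Lorentz forcing terms equals K(v) = −σ(|v|)² v. -/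
/-!
Write `g_μ(v) = s(v) (e_μ × v)` with `s = σ ∘ |·|`. The sum `Σ_j ∂_j g_μ^i g_μ^j` is the derivative of
`g_μ^i` in the direction `g_μ(v)`. By the product rule it splits into `Ds(v)(g_μ(v)) (e_μ × v)^i`, which
vanishes because `∇s(v)` is parallel to `v` while `g_μ(v) ⊥ v`, and `s(v)² (e_μ × (e_μ × v))^i`.
Summing over `μ`, `Σ_μ e_μ × (e_μ × v) = Σ_μ ((e_μ ⬝ v) e_μ - v) = -2v`.
-/

open Matrix

/-- Euclidean norm on `ℝ³ = Fin 3 → ℝ`. -/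
noncomputable def enorm3 (v : Fin 3 → ℝ) : ℝ := Real.sqrt (∑ k : Fin 3, v k ^ 2)

/-- Partial derivative of a scalar function on `ℝ³ = Fin 3 → ℝ` in the `j`-th
coordinate direction. -/
noncomputable def pd (f : (Fin 3 → ℝ) → ℝ) (j : Fin 3) (v : Fin 3 → ℝ) : ℝ :=
  fderiv ℝ f v (Pi.single j 1)

open WithLp

lemma enorm3_eq_sqrt_norm_toLp_sq (v : Fin 3 → ℝ) : enorm3 v = √(‖toLp 2 v‖ ^ 2) := by
  rw [EuclideanSpace.real_norm_sq_eq]; rfl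

lemma hasFDerivAt_enorm3 {v : Fin 3 → ℝ} (hv : v ≠ 0) :
    HasFDerivAt enorm3 ((enorm3 v)⁻¹ •
      (innerSL ℝ (toLp 2 v)).comp (EuclideanSpace.equiv (Fin 3) ℝ).symm.toContinuousLinearMap) v := by
  have hsq : ‖toLp 2 v‖ ^ 2 ≠ 0 := by simpa using hv
  have h := (Real.hasDerivAt_sqrt hsq).comp_hasFDerivAt v
    (EuclideanSpace.equiv (Fin 3) ℝ).symm.toContinuousLinearMap.hasFDerivAt.norm_sq
  rw [show enorm3 = _ from funext enorm3_eq_sqrt_norm_toLp_sq]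
  refine h.congr_fderiv ?_
  ext w
  simp only [norm_nonneg, Real.sqrt_sq, one_div, ContinuousLinearEquiv.coe_coe,
    PiLp.continuousLinearEquiv_symm_apply, _root_.smul_apply, ContinuousLinearMap.comp_apply,
    coe_innerSL_apply, nsmul_eq_mul, Nat.cast_ofNat, smul_eq_mul]
  field_simp

lemma sum_pd_mul_eq_fderiv_apply {f : (Fin 3 → ℝ) → Fin 3 → ℝ} {v : Fin 3 → ℝ}
    (hf : DifferentiableAt ℝ f v) (i : Fin 3) (x : Fin 3 → ℝ) :
    ∑ j, pd (fun w => f w i) j v * x j = fderiv ℝ f v x i := by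
  have hcoord (j : Fin 3) : pd (fun w => f w i) j v = fderiv ℝ f v (Pi.single j 1) i := by
    rw [pd, (hasFDerivAt_pi'.1 hf.hasFDerivAt i).fderiv]; rfl
  conv_rhs => rw [pi_eq_sum_univ' x]
  simp [hcoord, mul_comm]

lemma sum_single_cross_single_cross {R : Type*} [CommRing R] (v : Fin 3 → R) :
    ∑ μ : Fin 3, Pi.single μ 1 ⨯₃ (Pi.single μ 1 ⨯₃ v) = (-2 : R) • v := by
  simp only [cross_cross_eq_smul_sub_smul', Finset.sum_sub_distrib, single_dotProduct, one_mul]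
  rw [← pi_eq_sum_univ' v]
  simp only [Pi.single_eq_same, Finset.sum_const, Finset.card_univ, Fintype.card_fin]
  module

section Radial

variable {σ : ℝ → ℝ} {v : Fin 3 → ℝ}

lemma hasFDerivAt_comp_enorm3_smul (hσ : DifferentiableAt ℝ σ (enorm3 v)) (hv : v ≠ 0)
    (A : (Fin 3 → ℝ) →ₗ[ℝ] Fin 3 → ℝ) :
    HasFDerivAt (fun w => σ (enorm3 w) • A w)
      (σ (enorm3 v) • A.toContinuousLinearMap +
        (deriv σ (enorm3 v) • (enorm3 v)⁻¹ • (innerSL ℝ (toLp 2 v)).comp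
          (EuclideanSpace.equiv (Fin 3) ℝ).symm.toContinuousLinearMap).smulRight (A v)) v :=
  (hσ.hasDerivAt.comp_hasFDerivAt v (hasFDerivAt_enorm3 hv)).smul
    A.toContinuousLinearMap.hasFDerivAt

lemma fderiv_comp_enorm3_smul_apply_of_dotProduct_eq_zero (hσ : DifferentiableAt ℝ σ (enorm3 v))
    (hv : v ≠ 0) (A : (Fin 3 → ℝ) →ₗ[ℝ] Fin 3 → ℝ) {h : Fin 3 → ℝ} (hh : v ⬝ᵥ h = 0) :
    fderiv ℝ (fun w => σ (enorm3 w) • A w) v h = σ (enorm3 v) • A h := by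
  rw [(hasFDerivAt_comp_enorm3_smul hσ hv A).fderiv]
  simp [EuclideanSpace.inner_toLp_toLp, dotProduct_comm h, hh]

lemma lorentz_drift_eq (hσ : DifferentiableAt ℝ σ (enorm3 v)) (hv : v ≠ 0) (i : Fin 3) :
    (1/2) * ∑ μ : Fin 3, ∑ j : Fin 3,
      pd (fun w => (σ (enorm3 w) • Pi.single μ 1 ⨯₃ w) i) j v *
        (σ (enorm3 v) • Pi.single μ 1 ⨯₃ v) j
        = -(σ (enorm3 v)) ^ 2 * v i := by
  have hterm (μ : Fin 3) :
      ∑ j : Fin 3, pd (fun w => (σ (enorm3 w) • Pi.single μ 1 ⨯₃ w) i) j v *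
          (σ (enorm3 v) • Pi.single μ 1 ⨯₃ v) j =
        (σ (enorm3 v) ^ 2 • (Pi.single μ 1 ⨯₃ (Pi.single μ 1 ⨯₃ v))) i := by
    have htangent : v ⬝ᵥ (σ (enorm3 v) • Pi.single μ 1 ⨯₃ v) = 0 := by
      rw [dotProduct_smul, dot_cross_self, smul_zero]
    rw [sum_pd_mul_eq_fderiv_apply (hasFDerivAt_comp_enorm3_smul hσ hv _).differentiableAt,
      fderiv_comp_enorm3_smul_apply_of_dotProduct_eq_zero hσ hv _ htangent, map_smul, smul_smul,
      sq]
  simp_rw [hterm, ← Finset.sum_apply, ← Finset.smul_sum, sum_single_cross_single_cross]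
  simp only [Pi.smul_apply, smul_eq_mul]
  ring

end Radial

/-- **Drift coefficient of the Lorentz forcing terms.** For `σ : ℝ → ℝ` of class `C¹`
and `g_μ v = σ(|v|)(e_μ × v)`, each `g_μ` is differentiable at every `v ≠ 0`, and
`(1/2) Σ_μ Σ_j (∂g_μ^i/∂v^j)(v) g_μ^j(v) = −σ(|v|)² v^i`; hence with `G ≡ 0` the
associated drift coefficient is `K(v) = −σ(|v|)² v`. -/
theorem lorentz_drift_coefficient
    (σ : ℝ → ℝ) (hσ : ContDiff ℝ 1 σ)
    (g : Fin 3 → (Fin 3 → ℝ) → (Fin 3 → ℝ))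
    (hg : ∀ μ v, g μ v = σ (enorm3 v) • ((Pi.single μ 1 : Fin 3 → ℝ) ⨯₃ v)) :
    ∀ v : Fin 3 → ℝ, v ≠ 0 →
      (∀ μ : Fin 3, DifferentiableAt ℝ (g μ) v) ∧
      (∀ i : Fin 3,
        (1/2) * ∑ μ : Fin 3, ∑ j : Fin 3, pd (fun w => g μ w i) j v * g μ v j
          = -(σ (enorm3 v)) ^ 2 * v i) ∧
      (∀ (G K : (Fin 3 → ℝ) → Fin 3 → ℝ), (∀ w, G w = 0) →
        (∀ w i, K w i =
          G w i + (1/2) * ∑ μ : Fin 3, ∑ j : Fin 3, pd (fun u => g μ u i) j w * g μ w j) →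
        ∀ i : Fin 3, K v i = -(σ (enorm3 v)) ^ 2 * v i) := by
  obtain rfl : g = fun μ w => σ (enorm3 w) • Pi.single μ 1 ⨯₃ w := funext fun μ => funext (hg μ)
  intro v hv
  have hσv : DifferentiableAt ℝ σ (enorm3 v) := hσ.differentiable one_ne_zero _
  have hdrift := lorentz_drift_eq hσv hv
  refine ⟨fun μ => (hasFDerivAt_comp_enorm3_smul hσv hv _).differentiableAt, hdrift,
    fun G K hG hK i => ?_⟩
  rw [hK, hG, hdrift, Pi.zero_apply, zero_add]
end

section
/- Let ν : ℝ → ℝ be of class C² and f : ℝ³ → ℝ be of class C². Then for every v ∈ ℝ³ with v ≠ 0: (1/2) Σ_{i,j=1}^3 ∂²/∂v^i∂v^j[ ν(|v|)(|v|² δ_ij − v^i v^j) f(v) ] + Σ_{i=1}^3 ∂/∂v^i[ ν(|v|) v^i f(v) ] = (ν(|v|)/2) Σ_{i=1}^3 ∂/∂v^i[ Σ_{j=1}^3 (|v|² δ_ij − v^i v^j) (∂f/∂v^j)(v) ]. In other words, the Fokker–Planck operator with diffusion matrix D_ij(v) = ν(|v|)(|v|²δ_ij − v^i v^j) and drift K_i(v)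 = −ν(|v|) v^i equals the Lorentz collision operator C[f](v) = (ν(|v|)/2) ∇_v·((|v|²I − v⊗v)∇_v f) away from v = 0. -/
/-!
Write `A(v) = |v|² I − v ⊗ v`. This symmetric matrix annihilates `v`, its rows have divergence
`∑ⱼ ∂ⱼ A_ij = −2 vⁱ`, and the gradient of the radial factor `ν(|v|)` is parallel to `v`.
By the product rule, `∑ⱼ ∂ⱼ (ν A_ij f) = ν (A ∇f)ᵢ − 2 ν vⁱ f`: the term `f A ∇ν` vanishes, and
the second term cancels the drift once halved. In the outer divergence `∑ᵢ ∂ᵢ (ν (A ∇f)ᵢ)` the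
term `(A ∇f) · ∇ν` vanishes again, leaving `ν ∇ · (A ∇f)`.
-/

open Filter Topology Finset

section PartialDerivative

variable {g h : (Fin 3 → ℝ) → ℝ} {v : Fin 3 → ℝ}

lemma pd_congr_of_eventuallyEq (hgh : g =ᶠ[𝓝 v] h) (j : Fin 3) : pd g j v = pd h j v := by
  rw [pd, pd, hgh.fderiv_eq]

lemma pd_sub (hg : DifferentiableAt ℝ g v) (hh : DifferentiableAt ℝ h v) (j : Fin 3) :
    pd (fun w => g w - h w) j v = pd g j v - pd h j v := by
  simp [pd, fderiv_fun_sub hg hh]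

lemma pd_mul (hg : DifferentiableAt ℝ g v) (hh : DifferentiableAt ℝ h v) (j : Fin 3) :
    pd (fun w => g w * h w) j v = pd g j v * h v + g v * pd h j v := by
  simp [pd, fderiv_fun_mul hg hh]
  ring

lemma pd_const_mul (hg : DifferentiableAt ℝ g v) (c : ℝ) (j : Fin 3) :
    pd (fun w => c * g w) j v = c * pd g j v := by
  simp [pd, fderiv_const_mul hg c]

lemma pd_mul_const (hg : DifferentiableAt ℝ g v) (c : ℝ) (j : Fin 3) :
    pd (fun w => g w * c) j v = pd g j v * c := by
  rw [pd, pd, fderiv_mul_const hg c]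
  simp [mul_comm]

lemma pd_sum {ι : Type*} (s : Finset ι) {g : ι → (Fin 3 → ℝ) → ℝ}
    (hg : ∀ k ∈ s, DifferentiableAt ℝ (g k) v) (j : Fin 3) :
    pd (fun w => ∑ k ∈ s, g k w) j v = ∑ k ∈ s, pd (g k) j v := by
  simp [pd, fderiv_fun_sum hg]

lemma pd_apply (k j : Fin 3) (v : Fin 3 → ℝ) :
    pd (fun w => w k) j v = if k = j then 1 else 0 := by
  simp [pd, (hasFDerivAt_apply k v).fderiv, Pi.single_apply]

lemma pd_comp {φ : ℝ → ℝ} (hφ : DifferentiableAt ℝ φ (g v)) (hg : DifferentiableAt ℝ g v)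
    (j : Fin 3) : pd (fun w => φ (g w)) j v = deriv φ (g v) * pd g j v := by
  rw [pd, pd, show (fun w => φ (g w)) = φ ∘ g from rfl,
    (hφ.hasDerivAt.comp_hasFDerivAt v hg.hasFDerivAt).fderiv]
  simp

lemma ContDiffAt.pd {n : WithTop ℕ∞} (hg : ContDiffAt ℝ (n + 1) g v) (j : Fin 3) :
    ContDiffAt ℝ n (pd g j) v :=
  (hg.fderiv_right le_rfl).clm_apply contDiffAt_const

lemma sum_pd_mul (hg : DifferentiableAt ℝ g v) {F : Fin 3 → (Fin 3 → ℝ) → ℝ}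
    (hF : ∀ i, DifferentiableAt ℝ (F i) v) :
    ∑ i, pd (fun w => g w * F i w) i v = g v * ∑ i, pd (F i) i v + ∑ i, F i v * pd g i v := by
  simp only [pd_mul hg (hF _), mul_sum, ← sum_add_distrib]
  exact sum_congr rfl fun i _ => by ring

end PartialDerivative

section EuclideanNorm

variable {w : Fin 3 → ℝ}

lemma enorm3_eq_norm (w : Fin 3 → ℝ) :
    enorm3 w = ‖(WithLp.toLp 2 w : EuclideanSpace ℝ (Fin 3))‖ := by
  simp [enorm3, EuclideanSpace.norm_eq]

lemma enorm3_sq (w : Fin 3 → ℝ) : enorm3 w ^ 2 = ∑ k, w k ^ 2 :=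
  Real.sq_sqrt (sum_nonneg fun k _ => sq_nonneg (w k))

lemma enorm3_ne_zero (hw : w ≠ 0) : enorm3 w ≠ 0 := by
  simpa [enorm3_eq_norm] using hw

lemma contDiffAt_enorm3 {n : WithTop ℕ∞} (hw : w ≠ 0) : ContDiffAt ℝ n enorm3 w := by
  have hL : ContDiff ℝ n (fun w : Fin 3 → ℝ => (WithLp.toLp 2 w : EuclideanSpace ℝ (Fin 3))) :=
    (EuclideanSpace.equiv (Fin 3) ℝ).symm.contDiff
  simp only [funext enorm3_eq_norm]
  exact (contDiffAt_norm ℝ (by simpa using hw)).comp w hL.contDiffAt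

lemma differentiableAt_enorm3 (hw : w ≠ 0) : DifferentiableAt ℝ enorm3 w :=
  (contDiffAt_enorm3 (n := 1) hw).differentiableAt one_ne_zero

lemma contDiff_enorm3_sq {n : WithTop ℕ∞} : ContDiff ℝ n fun w => enorm3 w ^ 2 := by
  simp only [enorm3_sq]
  fun_prop

lemma pd_enorm3_sq (j : Fin 3) (v : Fin 3 → ℝ) : pd (fun w => enorm3 w ^ 2) j v = 2 * v j := by
  simp only [enorm3_sq]
  rw [pd_sum _ (fun k _ => by fun_prop)]
  simp [pd_comp (φ := fun x => x ^ 2) (differentiableAt_pow 2) (differentiableAt_apply _ _),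
    pd_apply]

lemma pd_enorm3 (hw : w ≠ 0) (j : Fin 3) : pd enorm3 j w = w j / enorm3 w := by
  have h := pd_comp (φ := fun x => x ^ 2) (differentiableAt_pow 2)
    (differentiableAt_enorm3 hw) j
  rw [pd_enorm3_sq] at h
  norm_num at h
  field_simp [enorm3_ne_zero hw]
  linarith

lemma pd_radial {ν : ℝ → ℝ} (hν : DifferentiableAt ℝ ν (enorm3 w)) (hw : w ≠ 0) (j : Fin 3) :
    pd (fun w => ν (enorm3 w)) j w = deriv ν (enorm3 w) / enorm3 w * w j := by
  rw [pd_comp hν (differentiableAt_enorm3 hw), pd_enorm3 hw]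
  ring

end EuclideanNorm

noncomputable def lorentzMatrix (w : Fin 3 → ℝ) (i j : Fin 3) : ℝ :=
  enorm3 w ^ 2 * (if i = j then 1 else 0) - w i * w j

section LorentzMatrix

variable (w : Fin 3 → ℝ)

lemma lorentzMatrix_comm (i j : Fin 3) : lorentzMatrix w i j = lorentzMatrix w j i := by
  simp only [lorentzMatrix, eq_comm (a := i), mul_comm (w i)]

lemma sum_lorentzMatrix_mul_self (i : Fin 3) : ∑ j, lorentzMatrix w i j * w j = 0 := by
  simp only [lorentzMatrix, sub_mul, sum_sub_distrib, mul_assoc, ← mul_sum, ite_mul, one_mul,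
    zero_mul, sum_ite_eq, mem_univ, if_true, ← pow_two, enorm3_sq]
  ring

lemma sum_lorentzMatrix_mulVec_mul_self (F : Fin 3 → ℝ) :
    ∑ i, (∑ j, lorentzMatrix w i j * F j) * w i = 0 := by
  calc ∑ i, (∑ j, lorentzMatrix w i j * F j) * w i
      = ∑ j, F j * ∑ i, lorentzMatrix w j i * w i := by
        simp only [sum_mul, mul_sum]
        rw [sum_comm]
        exact sum_congr rfl fun j _ => sum_congr rfl fun i _ => by
          rw [lorentzMatrix_comm]; ring
    _ = 0 := by simp [sum_lorentzMatrix_mul_self]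

lemma contDiff_lorentzMatrix {n : WithTop ℕ∞} (i j : Fin 3) :
    ContDiff ℝ n fun w => lorentzMatrix w i j := by
  have := contDiff_enorm3_sq (n := n)
  unfold lorentzMatrix
  fun_prop

lemma pd_lorentzMatrix (i j k : Fin 3) :
    pd (fun w => lorentzMatrix w i j) k w =
      (if i = j then 1 else 0) * (2 * w k)
        - ((if i = k then 1 else 0) * w j + w i * (if j = k then 1 else 0)) := by
  have hsq : DifferentiableAt ℝ (fun w => enorm3 w ^ 2) w :=
    contDiff_enorm3_sq.differentiable one_ne_zero w
  change pd (fun w => enorm3 w ^ 2 * (if i = j then 1 else 0) - w i * w j) k w = _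
  rw [pd_sub (hsq.mul_const _) ((differentiableAt_apply i w).fun_mul (differentiableAt_apply j w)),
    pd_mul_const hsq, pd_mul (differentiableAt_apply i w) (differentiableAt_apply j w),
    pd_enorm3_sq, pd_apply, pd_apply]
  ring

lemma sum_pd_lorentzMatrix (i : Fin 3) :
    ∑ j, pd (fun w => lorentzMatrix w i j) j w = -2 * w i := by
  simp only [pd_lorentzMatrix]
  fin_cases i <;> simp [Fin.sum_univ_three] <;> ring

end LorentzMatrix

noncomputable def lorentzFlux (f : (Fin 3 → ℝ) → ℝ) (i : Fin 3) (w : Fin 3 → ℝ) : ℝ :=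
  ∑ j, lorentzMatrix w i j * pd f j w

section LorentzOperator

variable {ν : ℝ → ℝ} {f : (Fin 3 → ℝ) → ℝ} {w : Fin 3 → ℝ}

lemma sum_pd_radial_mul_lorentzMatrix_mul (hν : DifferentiableAt ℝ ν (enorm3 w))
    (hf : DifferentiableAt ℝ f w) (hw : w ≠ 0) (i : Fin 3) :
    ∑ j, pd (fun w => ν (enorm3 w) * lorentzMatrix w i j * f w) j w
      = ν (enorm3 w) * lorentzFlux f i w - 2 * (ν (enorm3 w) * w i * f w) := by
  have hL (j : Fin 3) : DifferentiableAt ℝ (fun w => lorentzMatrix w i j) w :=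
    (contDiff_lorentzMatrix i j).differentiable one_ne_zero w
  have hN : DifferentiableAt ℝ (fun w => ν (enorm3 w)) w := hν.comp w (differentiableAt_enorm3 hw)
  have hcancel : ∑ j, lorentzMatrix w i j * f w * (deriv ν (enorm3 w) / enorm3 w * w j) = 0 :=
    calc _ = f w * (deriv ν (enorm3 w) / enorm3 w) * ∑ j, lorentzMatrix w i j * w j := by
          rw [mul_sum]; exact sum_congr rfl fun j _ => by ring
      _ = 0 := by rw [sum_lorentzMatrix_mul_self, mul_zero]
  simp only [mul_assoc (ν _)]
  rw [sum_pd_mul hN fun j => (hL j).fun_mul hf]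
  simp only [pd_radial hν hw, hcancel, pd_mul (hL _) hf, sum_add_distrib, ← sum_mul,
    sum_pd_lorentzMatrix, lorentzFlux]
  ring

lemma differentiableAt_lorentzFlux (hf : ∀ j, DifferentiableAt ℝ (pd f j) w) (i : Fin 3) :
    DifferentiableAt ℝ (lorentzFlux f i) w := by
  unfold lorentzFlux
  exact DifferentiableAt.fun_sum fun j _ =>
    ((contDiff_lorentzMatrix i j).differentiable one_ne_zero w).mul (hf j)

lemma sum_pd_radial_mul_lorentzFlux (hν : DifferentiableAt ℝ ν (enorm3 w))
    (hf : ∀ j, DifferentiableAt ℝ (pd f j) w) (hw : w ≠ 0) :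
    ∑ i, pd (fun w => ν (enorm3 w) * lorentzFlux f i w) i w
      = ν (enorm3 w) * ∑ i, pd (lorentzFlux f i) i w := by
  have hN : DifferentiableAt ℝ (fun w => ν (enorm3 w)) w := hν.comp w (differentiableAt_enorm3 hw)
  rw [sum_pd_mul hN (differentiableAt_lorentzFlux hf), add_eq_left]
  simp only [pd_radial hν hw, mul_left_comm _ (deriv ν _ / _), ← mul_sum, lorentzFlux,
    sum_lorentzMatrix_mulVec_mul_self, mul_zero]

lemma sum_pd_pd_radial_mul_lorentzMatrix_mul {v : Fin 3 → ℝ} (hν : ContDiff ℝ 2 ν)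
    (hf : ContDiff ℝ 2 f) (hv : v ≠ 0) (i : Fin 3) :
    ∑ j, pd (pd (fun w => ν (enorm3 w) * lorentzMatrix w i j * f w) j) i v
      = pd (fun w => ν (enorm3 w) * lorentzFlux f i w) i v
        - 2 * pd (fun w => ν (enorm3 w) * w i * f w) i v := by
  have hN : ContDiffAt ℝ 2 (fun w => ν (enorm3 w)) v := hν.contDiffAt.comp v (contDiffAt_enorm3 hv)
  have hpdf (j : Fin 3) : DifferentiableAt ℝ (pd f j) v :=
    (hf.contDiffAt.pd (n := 1) j).differentiableAt one_ne_zero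
  have hflux : DifferentiableAt ℝ (fun w => ν (enorm3 w) * lorentzFlux f i w) v :=
    (hN.differentiableAt two_ne_zero).mul (differentiableAt_lorentzFlux hpdf i)
  have hdrift : DifferentiableAt ℝ (fun w => ν (enorm3 w) * w i * f w) v :=
    ((hN.differentiableAt two_ne_zero).mul (differentiableAt_apply i v)).mul
      (hf.differentiable two_ne_zero v)
  have hsmooth (j : Fin 3) :
      ContDiffAt ℝ 2 (fun w => ν (enorm3 w) * lorentzMatrix w i j * f w) v :=
    (hN.mul (contDiff_lorentzMatrix i j).contDiffAt).mul hf.contDiffAt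
  rw [← pd_sum _ fun j _ => ((hsmooth j).pd (n := 1) j).differentiableAt one_ne_zero,
    ← pd_const_mul hdrift, ← pd_sub hflux (hdrift.const_mul 2)]
  exact pd_congr_of_eventuallyEq ((eventually_ne_nhds hv).mono fun w hw =>
    sum_pd_radial_mul_lorentzMatrix_mul (hν.differentiable two_ne_zero _)
      (hf.differentiable two_ne_zero w) hw i) i

end LorentzOperator

/-- **Fokker–Planck form of the Lorentz collision operator.** For `ν : ℝ → ℝ` of class
`C²` and `f : ℝ³ → ℝ` of class `C²`, at every `v ≠ 0`,
`(1/2) Σ_{i,j} ∂²/∂v^i∂v^j[ν(|v|)(|v|²δ_ij − v^i v^j) f] + Σ_i ∂/∂v^i[ν(|v|) v^i f]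
  = (ν(|v|)/2) Σ_i ∂/∂v^i[Σ_j (|v|²δ_ij − v^i v^j) ∂f/∂v^j]`,
i.e. the Fokker–Planck operator with diffusion `D_ij(v) = ν(|v|)(|v|²δ_ij − v^i v^j)`
and drift `K_i(v) = −ν(|v|) v^i` equals the Lorentz operator away from `v = 0`. -/
theorem lorentz_fokker_planck_form
    (ν : ℝ → ℝ) (hν : ContDiff ℝ 2 ν)
    (f : (Fin 3 → ℝ) → ℝ) (hf : ContDiff ℝ 2 f)
    (v : Fin 3 → ℝ) (hv : v ≠ 0) :
    (1/2) * (∑ i : Fin 3, ∑ j : Fin 3,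
        pd (pd (fun w => ν (enorm3 w)
          * ((enorm3 w) ^ 2 * (if i = j then 1 else 0) - w i * w j) * f w) j) i v)
      + ∑ i : Fin 3, pd (fun w => ν (enorm3 w) * w i * f w) i v
    = ν (enorm3 v) / 2 * ∑ i : Fin 3,
        pd (fun w => ∑ j : Fin 3,
          ((enorm3 w) ^ 2 * (if i = j then 1 else 0) - w i * w j) * pd f j w) i v := by
  have hpdf (j : Fin 3) : DifferentiableAt ℝ (pd f j) v :=
    (hf.contDiffAt.pd (n := 1) j).differentiableAt one_ne_zero
  change (1/2) * ∑ i, ∑ j, pd (pd (fun w => ν (enorm3 w) * lorentzMatrix w i j * f w) j) i v + _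
    = ν (enorm3 v) / 2 * ∑ i, pd (lorentzFlux f i) i v
  rw [sum_congr rfl fun i _ => sum_pd_pd_radial_mul_lorentzMatrix_mul hν hf hv i, sum_sub_distrib,
    ← mul_sum, sum_pd_radial_mul_lorentzFlux (hν.differentiable two_ne_zero _) hpdf hv]
  ring
end
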